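/- arXiv:2012.01652 — 3 statements merged into one kernel-verified Lean document; each statement's English description precedes it below -/
import Mathlib

section
/- Let (Ω, μ) be a probability space and Q : Ω → ℝ^M an integrable random vector with componentwise expectation q̂ = E[Q]. Let φ : ℝ^M → ℝ be such that φ ∘ Q is integrable and φ has a gradient at q̂ and at a point s ∈ ℝ^M. Then the expected Bregman divergence decomposes as E[d_φ(Q, s)] = E[d_φ(Q, q̂)] + d_φ(q̂, s), where d_φ(q, p) = φ(q) − φ(p) − ⟨q − p, ∇φ(p)⟩. -/
open MeasureTheory RealInnerProductSpace

/-!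
Subtracting the Bregman divergences at two base points leaves an affine function of `q`:
`d(q, p) = d(q, r) + d(r, p) + ⟪q - r, ∇φ(r) - ∇φ(p)⟫`. Taking `r = E[Q]`, the last term has
mean zero.
-/

section Bregman

variable {E : Type*} [NormedAddCommGroup E] [InnerProductSpace ℝ E]

/-- `d_φ(q, p)`, with the vector `g` in the place of `∇φ(p)`. -/
def bregmanDiv (φ : E → ℝ) (g q p : E) : ℝ :=
  φ q - φ p - ⟪q - p, g⟫

theorem bregmanDiv_three_point (φ : E → ℝ) (gp gr q r p : E) :
    bregmanDiv φ gp q p = bregmanDiv φ gr q r + bregmanDiv φ gp r p + ⟪q - r, gr - gp⟫ := by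
  simp only [bregmanDiv, inner_sub_left, inner_sub_right]
  ring

variable {Ω : Type*} [MeasurableSpace Ω] {μ : Measure Ω}

theorem MeasureTheory.Integrable.bregmanDiv [IsFiniteMeasure μ] {φ : E → ℝ} {Q : Ω → E}
    (hφQ : Integrable (fun ω => φ (Q ω)) μ) (hQ : Integrable Q μ) (g p : E) :
    Integrable (fun ω => bregmanDiv φ g (Q ω) p) μ :=
  (hφQ.sub (integrable_const _)).sub ((hQ.sub (integrable_const p)).inner_const g)

variable [CompleteSpace E]

theorem integral_inner_sub_integral_self [IsProbabilityMeasure μ] {Q : Ω → E}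
    (hQ : Integrable Q μ) (c : E) :
    ∫ ω, ⟪Q ω - ∫ ω', Q ω' ∂μ, c⟫ ∂μ = 0 := by
  have hcentered : Integrable (fun ω => Q ω - ∫ ω', Q ω' ∂μ) μ := hQ.sub (integrable_const _)
  simp_rw [real_inner_comm c]
  rw [integral_inner hcentered, integral_sub hQ (integrable_const _), integral_const,
    probReal_univ, one_smul, sub_self, inner_zero_right]

theorem integral_bregmanDiv_eq_integral_bregmanDiv_mean_add [IsProbabilityMeasure μ]
    {φ : E → ℝ} {Q : Ω → E} (hφQ : Integrable (fun ω => φ (Q ω)) μ) (hQ : Integrable Q μ)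
    (g gmean p : E) :
    ∫ ω, bregmanDiv φ g (Q ω) p ∂μ
      = ∫ ω, bregmanDiv φ gmean (Q ω) (∫ ω', Q ω' ∂μ) ∂μ
        + bregmanDiv φ g (∫ ω', Q ω' ∂μ) p := by
  set qmean := ∫ ω', Q ω' ∂μ
  set dmean := bregmanDiv φ g qmean p
  have hmean : Integrable (fun ω => bregmanDiv φ gmean (Q ω) qmean) μ := hφQ.bregmanDiv hQ _ _
  have hshifted : Integrable (fun ω => bregmanDiv φ gmean (Q ω) qmean + dmean) μ :=
    hmean.add (integrable_const _)
  have hcentered : Integrable (fun ω => ⟪Q ω - qmean, gmean - g⟫) μ :=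
    (hQ.sub (integrable_const _)).inner_const _
  conv_lhs => enter [2, ω]; rw [bregmanDiv_three_point φ g gmean (Q ω) qmean p]
  rw [integral_add hshifted hcentered, integral_add hmean (integrable_const _),
    integral_inner_sub_integral_self hQ, integral_const, probReal_univ, one_smul, add_zero]

end Bregman

theorem expected_bregman_decomposition_general
    {M : ℕ} {Ω : Type*} [MeasurableSpace Ω] (μ : Measure Ω) [IsProbabilityMeasure μ]
    (Q : Ω → EuclideanSpace ℝ (Fin M))
    (hQint : ∀ m, Integrable (fun ω => Q ω m) μ)
    (φ : EuclideanSpace ℝ (Fin M) → ℝ)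
    (hφQ : Integrable (fun ω => φ (Q ω)) μ)
    (qhat : EuclideanSpace ℝ (Fin M))
    (hqhat : ∀ m, qhat m = ∫ ω, Q ω m ∂μ)
    (s : EuclideanSpace ℝ (Fin M))
    (gs ghat : EuclideanSpace ℝ (Fin M)) :
    ∫ ω, (φ (Q ω) - φ s - ⟪Q ω - s, gs⟫) ∂μ
      = (∫ ω, (φ (Q ω) - φ qhat - ⟪Q ω - qhat, ghat⟫) ∂μ)
        + (φ qhat - φ s - ⟪qhat - s, gs⟫) := by
  have hqhat_eq : qhat = ∫ ω, Q ω ∂μ := by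
    ext m
    rw [hqhat m, eval_integral_piLp hQint m]
  subst hqhat_eq
  exact integral_bregmanDiv_eq_integral_bregmanDiv_mean_add hφQ
    (Integrable.of_eval_piLp hQint) gs ghat s

/-- The expected Bregman divergence decomposes as
`E[d_φ(Q, s)] = E[d_φ(Q, q̂)] + d_φ(q̂, s)` where `q̂ = E[Q]` (componentwise). -/
theorem expected_bregman_decomposition
    {M : ℕ} {Ω : Type*} [MeasurableSpace Ω] (μ : Measure Ω) [IsProbabilityMeasure μ]
    (Q : Ω → EuclideanSpace ℝ (Fin M))
    (hQint : ∀ m, Integrable (fun ω => Q ω m) μ)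
    (φ : EuclideanSpace ℝ (Fin M) → ℝ)
    (hφQ : Integrable (fun ω => φ (Q ω)) μ)
    (qhat : EuclideanSpace ℝ (Fin M))
    (hqhat : ∀ m, qhat m = ∫ ω, Q ω m ∂μ)
    (s : EuclideanSpace ℝ (Fin M))
    (gs ghat : EuclideanSpace ℝ (Fin M))
    (hgs : HasGradientAt φ gs s) (hghat : HasGradientAt φ ghat qhat) :
    ∫ ω, (φ (Q ω) - φ s - ⟪Q ω - s, gs⟫) ∂μ
      = (∫ ω, (φ (Q ω) - φ qhat - ⟪Q ω - qhat, ghat⟫) ∂μ)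
        + (φ qhat - φ s - ⟪qhat - s, gs⟫) :=
  expected_bregman_decomposition_general μ Q hQint φ hφQ qhat hqhat s gs ghat
end

section
/- Let (Ω, μ) be a probability space and Q : Ω → ℝ^M an integrable random vector with componentwise expectation q̂ = E[Q]. Let S ⊆ ℝ^M be a convex set containing q̂ and containing the values of Q almost surely, and let φ : ℝ^M → ℝ be strictly convex on S with φ ∘ Q integrable and φ differentiable at q̂. Then E[d_φ(Q, q̂)] = E[φ(Q)] − φ(q̂) (the Jensen gap), and for every s ∈ S with s ≠ q̂ at which φ is differentiable, E[d_φ(Q, s)] > E[d_φ(Q, q̂)]; that is, q̂ = E[Q] is the unique minimizer of s ↦ E[d_φ(Q, s)] among such points. -/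
open MeasureTheory RealInnerProductSpace

/-!
Since `⟪Q - s, g⟫` is affine in `Q`, taking expectations gives
`E[d_φ(Q, s)] = (E[φ(Q)] - φ(q̂)) + d_φ(q̂, s)`: the Jensen gap plus the divergence of the mean
from `s`. The latter vanishes at `s = q̂` and is positive for `s ≠ q̂`, because a strictly convex
function lies strictly above its tangent hyperplane, as one sees by restricting it to the segment
from `s` to `q̂`.
-/

theorem StrictConvexOn.comp_affineMap {𝕜 E F β : Type*} [Field 𝕜] [LinearOrder 𝕜]
    [AddCommGroup E] [AddCommGroup F] [Module 𝕜 E] [Module 𝕜 F]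
    [AddCommMonoid β] [PartialOrder β] [SMul 𝕜 β] {f : F → β} {s : Set F}
    (g : E →ᵃ[𝕜] F) (hg : Function.Injective g) (hf : StrictConvexOn 𝕜 s f) :
    StrictConvexOn 𝕜 (g ⁻¹' s) (f ∘ g) :=
  ⟨hf.1.affine_preimage g, fun x hx y hy hxy a b ha hb hab => by
    simpa only [Function.comp_apply, Convex.combo_affine_apply hab] using
      hf.2 hx hy (hg.ne hxy) ha hb hab⟩

section InnerProductSpace

variable {E : Type*} [NormedAddCommGroup E] [InnerProductSpace ℝ E] [CompleteSpace E]

theorem StrictConvexOn.inner_sub_lt_sub_of_hasGradientAt {S : Set E}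
    {φ : E → ℝ} (hφ : StrictConvexOn ℝ S φ) {s q g : E} (hs : s ∈ S) (hq : q ∈ S) (hsq : s ≠ q)
    (hg : HasGradientAt φ g s) :
    ⟪q - s, g⟫ < φ q - φ s := by
  let line : ℝ →ᵃ[ℝ] E := AffineMap.lineMap s q
  have hline := hφ.comp_affineMap line (AffineMap.lineMap_injective ℝ hsq)
  have hderiv : HasDerivAt (φ ∘ line) ⟪g, q - s⟫ 0 := by
    have hφ' := (AffineMap.lineMap_apply_zero s q (k := ℝ)).symm ▸ hg.hasFDerivAt
    simpa using hφ'.comp_hasDerivAt (0 : ℝ) AffineMap.hasDerivAt_lineMap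
  rw [real_inner_comm]
  simpa [line, slope_def_field] using
    hline.lt_slope_of_hasDerivAt (by simpa [line]) (by simpa [line]) zero_lt_one hderiv

section Expectation

variable {Ω : Type*} [MeasurableSpace Ω] {μ : Measure Ω} [IsProbabilityMeasure μ] {Q : Ω → E}

theorem integral_inner_sub_const (hQ : Integrable Q μ) (c g : E) :
    ∫ ω, ⟪Q ω - c, g⟫ ∂μ = ⟪(∫ ω, Q ω ∂μ) - c, g⟫ := by
  simp_rw [real_inner_comm g]
  rw [integral_inner (f := fun ω => Q ω - c) (hQ.sub (integrable_const c)),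
    integral_sub hQ (integrable_const c), integral_const, probReal_univ, one_smul]

theorem integral_bregman_eq {φ : E → ℝ} (hQ : Integrable Q μ)
    (hφQ : Integrable (fun ω => φ (Q ω)) μ) (c g : E) :
    ∫ ω, (φ (Q ω) - φ c - ⟪Q ω - c, g⟫) ∂μ
      = (∫ ω, φ (Q ω) ∂μ) - φ c - ⟪(∫ ω, Q ω ∂μ) - c, g⟫ := by
  have hinner : Integrable (fun ω => ⟪Q ω - c, g⟫) μ := (hQ.sub (integrable_const c)).inner_const g
  rw [integral_sub (f := fun ω => φ (Q ω) - φ c) (hφQ.sub (integrable_const _)) hinner,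
    integral_sub hφQ (integrable_const _), integral_inner_sub_const hQ, integral_const,
    probReal_univ, one_smul]

end Expectation

end InnerProductSpace

theorem bregman_representative_unique_minimizer_general
    {M : ℕ} {Ω : Type*} [MeasurableSpace Ω] (μ : Measure Ω) [IsProbabilityMeasure μ]
    (Q : Ω → EuclideanSpace ℝ (Fin M))
    (hQint : ∀ m, Integrable (fun ω => Q ω m) μ)
    (S : Set (EuclideanSpace ℝ (Fin M)))
    (qhat : EuclideanSpace ℝ (Fin M))
    (hqhat : ∀ m, qhat m = ∫ ω, Q ω m ∂μ)
    (hqhatS : qhat ∈ S)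
    (φ : EuclideanSpace ℝ (Fin M) → ℝ)
    (hφstrict : StrictConvexOn ℝ S φ)
    (hφQ : Integrable (fun ω => φ (Q ω)) μ)
    (ghat : EuclideanSpace ℝ (Fin M)) :
    (∫ ω, (φ (Q ω) - φ qhat - ⟪Q ω - qhat, ghat⟫) ∂μ
        = (∫ ω, φ (Q ω) ∂μ) - φ qhat)
    ∧ (∀ s ∈ S, s ≠ qhat → ∀ gs : EuclideanSpace ℝ (Fin M), HasGradientAt φ gs s →
        (∫ ω, (φ (Q ω) - φ qhat - ⟪Q ω - qhat, ghat⟫) ∂μ)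
          < ∫ ω, (φ (Q ω) - φ s - ⟪Q ω - s, gs⟫) ∂μ) := by
  have hQ : Integrable Q μ := Integrable.of_eval_piLp hQint
  have hmean : qhat = ∫ ω, Q ω ∂μ := by
    ext m
    rw [hqhat, eval_integral_piLp hQint]
  subst hmean
  refine ⟨by rw [integral_bregman_eq hQ hφQ, sub_self, inner_zero_left, sub_zero],
    fun s hs hsq gs hgs => ?_⟩
  have hpos := hφstrict.inner_sub_lt_sub_of_hasGradientAt hs hqhatS hsq hgs
  rw [integral_bregman_eq hQ hφQ, integral_bregman_eq hQ hφQ, sub_self, inner_zero_left]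
  linarith

/-- Bregman representative: the componentwise mean `q̂ = E[Q]` attains expected Bregman
divergence equal to the Jensen gap `E[φ(Q)] - φ(q̂)`, and is the unique minimizer of
`s ↦ E[d_φ(Q, s)]` over points of `S` at which `φ` is differentiable. -/
theorem bregman_representative_unique_minimizer
    {M : ℕ} {Ω : Type*} [MeasurableSpace Ω] (μ : Measure Ω) [IsProbabilityMeasure μ]
    (Q : Ω → EuclideanSpace ℝ (Fin M))
    (hQint : ∀ m, Integrable (fun ω => Q ω m) μ)
    (S : Set (EuclideanSpace ℝ (Fin M))) (hS : Convex ℝ S)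
    (qhat : EuclideanSpace ℝ (Fin M))
    (hqhat : ∀ m, qhat m = ∫ ω, Q ω m ∂μ)
    (hqhatS : qhat ∈ S)
    (hQS : ∀ᵐ ω ∂μ, Q ω ∈ S)
    (φ : EuclideanSpace ℝ (Fin M) → ℝ)
    (hφstrict : StrictConvexOn ℝ S φ)
    (hφQ : Integrable (fun ω => φ (Q ω)) μ)
    (ghat : EuclideanSpace ℝ (Fin M))
    (hghat : HasGradientAt φ ghat qhat) :
    (∫ ω, (φ (Q ω) - φ qhat - ⟪Q ω - qhat, ghat⟫) ∂μ
        = (∫ ω, φ (Q ω) ∂μ) - φ qhat)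
    ∧ (∀ s ∈ S, s ≠ qhat → ∀ gs : EuclideanSpace ℝ (Fin M), HasGradientAt φ gs s →
        (∫ ω, (φ (Q ω) - φ qhat - ⟪Q ω - qhat, ghat⟫) ∂μ)
          < ∫ ω, (φ (Q ω) - φ s - ⟪Q ω - s, gs⟫) ∂μ) :=
  bregman_representative_unique_minimizer_general μ Q hQint S qhat hqhat hqhatS φ hφstrict hφQ ghat
end

section
/- Let (Ω, μ) be a probability space and Q : Ω → ℝ^M a random vector whose entries are almost surely strictly positive, with each Q_m and each log Q_m integrable, and let q̂_m = E[Q_m] (so q̂ has strictly positive entries). Let p ∈ ℝ^M have strictly positive entries, set γ̂ = (1/M) ∑_{m=1}^M log(q̂_m/p_m), and define the sample processing vector h ∈ ℝ^M by h_m = (1/M)( (1 + γ̂)/q̂_m − 1/p_m ). Then E[−⟨Q, h⟩] = E[D_IS(Q, p)] − E[D_IS(Q, q̂)], and consequently |E[−⟨Q, h⟩] − E[D_IS(Q, p)]| = E[D_IS(Q, q̂)]. -/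
/-!
Both sides of the identity equal `D_IS(q̂, p)`. The divergence `D_IS(Q, c)` is affine in `Q`
apart from the term `-log Q_m`, which does not depend on `c`; hence
`E[D_IS(Q, c)] = D_IS(q̂, c) + J` with the same Jensen gap `J` for every `c`, and `c = q̂` shows
`J = E[D_IS(Q, q̂)] ≥ 0`. On the other hand `-⟨Q, h⟩` is linear in `Q`, and the choice of `γ̂`
makes `-⟨q̂, h⟩ = D_IS(q̂, p)`.
-/

open MeasureTheory Real Finset

lemma integral_pos_of_ae_pos {α : Type*} [MeasurableSpace α] {μ : Measure α} [NeZero μ]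
    {f : α → ℝ} (hf : ∀ᵐ x ∂μ, 0 < f x) (hfi : Integrable f μ) : 0 < ∫ x, f x ∂μ := by
  rw [integral_pos_iff_support_of_nonneg_ae (hf.mono fun _ hx => hx.le) hfi]
  have hsupp : Function.support f =ᵐ[μ] Set.univ :=
    ae_eq_univ.mpr (ae_iff.mp (hf.mono fun _ hx => hx.ne'))
  simp [measure_congr hsupp, NeZero.ne]

noncomputable def itakuraSaito {M : ℕ} (q p : Fin M → ℝ) : ℝ :=
  (1 / (M : ℝ)) * ∑ m, (q m / p m - 1 - Real.log (q m / p m))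

noncomputable def sampleProcessingVector {M : ℕ} (q p : Fin M → ℝ) : Fin M → ℝ :=
  fun m => (1 / (M : ℝ)) * ((1 + (1 / (M : ℝ)) * ∑ k, Real.log (q k / p k)) / q m - 1 / p m)

section ItakuraSaito

variable {M : ℕ}

lemma itakuraSaito_self {q : Fin M → ℝ} (hq : ∀ m, q m ≠ 0) : itakuraSaito q q = 0 := by
  simp [itakuraSaito, div_self (hq _)]

lemma itakuraSaito_nonneg {q p : Fin M → ℝ} (hq : ∀ m, 0 < q m) (hp : ∀ m, 0 < p m) :
    0 ≤ itakuraSaito q p := by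
  refine mul_nonneg (by positivity) (sum_nonneg fun m _ => ?_)
  linarith [Real.log_le_sub_one_of_pos (div_pos (hq m) (hp m))]

lemma neg_sum_mul_sampleProcessingVector {q : Fin M → ℝ} (hq : ∀ m, q m ≠ 0)
    (p : Fin M → ℝ) : -∑ m, q m * sampleProcessingVector q p m = itakuraSaito q p := by
  rcases Nat.eq_zero_or_pos M with rfl | hM
  · simp [itakuraSaito]
  have hM' : (M : ℝ) ≠ 0 := by positivity
  have hterm : ∀ m, q m * sampleProcessingVector q p m
      = (1 / (M : ℝ)) * (1 + (1 / (M : ℝ)) * ∑ k, Real.log (q k / p k) - q m / p m) := by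
    intro m
    simp only [sampleProcessingVector]
    field_simp [hq m]
  simp only [itakuraSaito, hterm, ← mul_sum, sum_sub_distrib, sum_const, card_univ,
    Fintype.card_fin, nsmul_eq_mul]
  field_simp [hM']
  ring

end ItakuraSaito

section Expectation

variable {M : ℕ} {Ω : Type*} [MeasurableSpace Ω] {μ : Measure Ω}

lemma integral_neg_sum_mul {Q : Ω → Fin M → ℝ} (hQint : ∀ m, Integrable (fun ω => Q ω m) μ)
    (h : Fin M → ℝ) : ∫ ω, -(∑ m, Q ω m * h m) ∂μ = -∑ m, (∫ ω, Q ω m ∂μ) * h m := by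
  rw [integral_neg, integral_finsetSum _ fun m _ => (hQint m).mul_const (h m)]
  simp only [integral_mul_const]

variable [IsProbabilityMeasure μ]

lemma integral_itakuraSaito {Q : Ω → Fin M → ℝ} (hQpos : ∀ᵐ ω ∂μ, ∀ m, 0 < Q ω m)
    (hQint : ∀ m, Integrable (fun ω => Q ω m) μ)
    (hQlogint : ∀ m, Integrable (fun ω => Real.log (Q ω m)) μ)
    (hqpos : ∀ m, 0 < ∫ ω, Q ω m ∂μ) {c : Fin M → ℝ} (hc : ∀ m, 0 < c m) :
    ∫ ω, itakuraSaito (Q ω) c ∂μ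
      = itakuraSaito (fun m => ∫ ω, Q ω m ∂μ) c
        + (1 / (M : ℝ)) * ∑ m, (Real.log (∫ ω, Q ω m ∂μ) - ∫ ω, Real.log (Q ω m) ∂μ) := by
  have hexpand : ∀ m, (fun ω => Q ω m / c m - 1 - Real.log (Q ω m / c m))
      =ᵐ[μ] fun ω => Q ω m / c m - 1 - Real.log (Q ω m) + Real.log (c m) := by
    intro m
    filter_upwards [hQpos] with ω hω
    rw [Real.log_div (hω m).ne' (hc m).ne']
    ring
  have hint : ∀ m, Integrable (fun ω => Q ω m / c m - 1 - Real.log (Q ω m)) μ := fun m =>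
    (((hQint m).div_const _).sub (integrable_const 1)).sub (hQlogint m)
  have hterm : ∀ m, ∫ ω, (Q ω m / c m - 1 - Real.log (Q ω m / c m)) ∂μ
      = (∫ ω, Q ω m ∂μ) / c m - 1 - ∫ ω, Real.log (Q ω m) ∂μ + Real.log (c m) := by
    intro m
    have hlin : Integrable (fun ω => Q ω m / c m - 1) μ :=
      ((hQint m).div_const _).sub (integrable_const 1)
    rw [integral_congr_ae (hexpand m), integral_add (hint m) (integrable_const _),
      integral_sub hlin (hQlogint m),
      integral_sub ((hQint m).div_const _) (integrable_const 1), integral_div]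
    simp
  have hint' : ∀ m, Integrable (fun ω => Q ω m / c m - 1 - Real.log (Q ω m / c m)) μ := fun m =>
    ((hint m).add (integrable_const _)).congr (hexpand m).symm
  simp only [itakuraSaito]
  rw [integral_const_mul, integral_finsetSum _ fun m _ => hint' m, ← mul_add, ← sum_add_distrib]
  congr 1
  refine sum_congr rfl fun m _ => ?_
  rw [hterm, Real.log_div (hqpos m).ne' (hc m).ne']
  ring

lemma integral_itakuraSaito_eq_add {Q : Ω → Fin M → ℝ} (hQpos : ∀ᵐ ω ∂μ, ∀ m, 0 < Q ω m)
    (hQint : ∀ m, Integrable (fun ω => Q ω m) μ)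
    (hQlogint : ∀ m, Integrable (fun ω => Real.log (Q ω m)) μ)
    {p : Fin M → ℝ} (hp : ∀ m, 0 < p m) :
    ∫ ω, itakuraSaito (Q ω) p ∂μ
      = itakuraSaito (fun m => ∫ ω, Q ω m ∂μ) p
        + ∫ ω, itakuraSaito (Q ω) (fun m => ∫ ω, Q ω m ∂μ) ∂μ := by
  have hqpos : ∀ m, 0 < ∫ ω, Q ω m ∂μ := fun m =>
    integral_pos_of_ae_pos (hQpos.mono fun _ hω => hω m) (hQint m)
  rw [integral_itakuraSaito hQpos hQint hQlogint hqpos hp,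
    integral_itakuraSaito hQpos hQint hQlogint hqpos hqpos,
    itakuraSaito_self fun m => (hqpos m).ne', zero_add]

end Expectation

/-- For a.s. entrywise-positive `Q`, the Itakura–Saito-minimizing sample processing
vector `h m = (1/M)((1 + γ̂)/q̂ m - 1/p m)` with `γ̂ = (1/M) ∑ m, log (q̂ m / p m)`
satisfies `E[-⟨Q, h⟩] = E[D_IS(Q, p)] - E[D_IS(Q, q̂)]`, hence the distortion
`|E[-⟨Q, h⟩] - E[D_IS(Q, p)]|` equals the Jensen gap `E[D_IS(Q, q̂)]`. -/
theorem IS_spectral_surrogate_distortion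
    {M : ℕ} {Ω : Type*} [MeasurableSpace Ω] (μ : Measure Ω) [IsProbabilityMeasure μ]
    (Q : Ω → Fin M → ℝ)
    (hQpos : ∀ᵐ ω ∂μ, ∀ m, 0 < Q ω m)
    (hQint : ∀ m, Integrable (fun ω => Q ω m) μ)
    (hQlogint : ∀ m, Integrable (fun ω => Real.log (Q ω m)) μ)
    (qhat : Fin M → ℝ)
    (hqhat : ∀ m, qhat m = ∫ ω, Q ω m ∂μ)
    (p : Fin M → ℝ) (hp : ∀ m, 0 < p m)
    (γhat : ℝ) (hγhat : γhat = (1 / (M : ℝ)) * ∑ m, Real.log (qhat m / p m))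
    (h : Fin M → ℝ)
    (hh : ∀ m, h m = (1 / (M : ℝ)) * ((1 + γhat) / qhat m - 1 / p m)) :
    (∫ ω, -(∑ m, Q ω m * h m) ∂μ
        = (∫ ω, (1 / (M : ℝ)) * ∑ m, (Q ω m / p m - 1 - Real.log (Q ω m / p m)) ∂μ)
          - ∫ ω, (1 / (M : ℝ)) * ∑ m, (Q ω m / qhat m - 1 - Real.log (Q ω m / qhat m)) ∂μ)
    ∧ |(∫ ω, -(∑ m, Q ω m * h m) ∂μ)
          - ∫ ω, (1 / (M : ℝ)) * ∑ m, (Q ω m / p m - 1 - Real.log (Q ω m / p m)) ∂μ|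
        = ∫ ω, (1 / (M : ℝ)) * ∑ m, (Q ω m / qhat m - 1 - Real.log (Q ω m / qhat m)) ∂μ := by
  have hqhat_fun : (fun m => ∫ ω, Q ω m ∂μ) = qhat := funext fun m => (hqhat m).symm
  have hqpos : ∀ m, 0 < qhat m := fun m =>
    hqhat m ▸ integral_pos_of_ae_pos (hQpos.mono fun _ hω => hω m) (hQint m)
  obtain rfl : h = sampleProcessingVector qhat p := funext fun m => by rw [hh, hγhat]; rfl
  have hinner :
      ∫ ω, -(∑ m, Q ω m * sampleProcessingVector qhat p m) ∂μ = itakuraSaito qhat p := by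
    simp only [integral_neg_sum_mul hQint, ← hqhat]
    exact neg_sum_mul_sampleProcessingVector (fun m => (hqpos m).ne') p
  have hgap := integral_itakuraSaito_eq_add hQpos hQint hQlogint hp
  rw [hqhat_fun] at hgap
  have hgap_nonneg : 0 ≤ ∫ ω, itakuraSaito (Q ω) qhat ∂μ :=
    integral_nonneg_of_ae (hQpos.mono fun _ hω => itakuraSaito_nonneg hω hqpos)
  change _ = ∫ ω, itakuraSaito (Q ω) p ∂μ - ∫ ω, itakuraSaito (Q ω) qhat ∂μ
    ∧ |_ - ∫ ω, itakuraSaito (Q ω) p ∂μ| = ∫ ω, itakuraSaito (Q ω) qhat ∂μ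
  rw [hinner, hgap]
  exact ⟨by ring, by rw [sub_add_cancel_left, abs_neg, abs_of_nonneg hgap_nonneg]⟩
end
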